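/- Let R be a commutative ring in which 2 is invertible, M an R-module, d : R → M an R-derivation, and B : M × M → R a symmetric R-bilinear map. For f, f̃ ∈ R set (f̃₁, f̃₂, f̃₃) := (f, −½, −½f²) and (f₁, f₂, f₃) := (f·f̃, f²·f̃, f̃). Then: (i) Σ_{A=1}^{3} f̃_A·f_A = 0; (ii) Σ_{A=1}^{3} f̃_A·d(f_A) = 0; (iii) Σ_{A=1}^{3} f_A·d(f̃_A) = 0; yet (iv) Σ_{A=1}^{3} B(d(f̃_A), d(f_A)) = f̃ · B(d(f), d(f)). -/
import Mathlib


/-- Let `R` be a commutative ring in which `2` is invertible, `M` an `R`-module,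
`d : R → M` an `R`-derivation, and `B : M × M → R` a symmetric `R`-bilinear map. For
`f, f̃ ∈ R` set `(f̃₁, f̃₂, f̃₃) := (f, −½, −½f²)` and `(f₁, f₂, f₃) := (f·f̃, f²·f̃, f̃)`.
Then: (i) `Σ_{A=1}^{3} f̃_A·f_A = 0`; (ii) `Σ_{A=1}^{3} f̃_A·d(f_A) = 0`;
(iii) `Σ_{A=1}^{3} f_A·d(f̃_A) = 0`; yet
(iv) `Σ_{A=1}^{3} B(d(f̃_A), d(f_A)) = f̃ · B(d(f), d(f))`. -/
theorem stmt_15 {R M : Type*} [CommRing R] [Invertible (2 : R)]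
    [AddCommGroup M] [Module R M]
    (d : R →+ M) (hleib : ∀ f g : R, d (f * g) = f • d g + g • d f)
    (B : M →ₗ[R] M →ₗ[R] R) (hBsymm : ∀ u v : M, B u v = B v u)
    (f ft : R) :
    -- with  (f̃₁, f̃₂, f̃₃) = (f, −½, −½f²)  and  (f₁, f₂, f₃) = (f·f̃, f²·f̃, f̃) :
    (f * (f * ft) + (-⅟(2 : R)) * (f ^ 2 * ft) + (-(⅟(2 : R) * f ^ 2)) * ft = 0) ∧
    (f • d (f * ft) + (-⅟(2 : R)) • d (f ^ 2 * ft)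
        + (-(⅟(2 : R) * f ^ 2)) • d ft = 0) ∧
    ((f * ft) • d f + (f ^ 2 * ft) • d (-⅟(2 : R))
        + ft • d (-(⅟(2 : R) * f ^ 2)) = 0) ∧
    (B (d f) (d (f * ft)) + B (d (-⅟(2 : R))) (d (f ^ 2 * ft))
        + B (d (-(⅟(2 : R) * f ^ 2))) (d ft)
      = ft * B (d f) (d f)) := by
  have hd1 : d 1 = 0 := by
    have := hleib 1 1
    simp only [one_mul, one_smul] at this
    have h2 : d 1 + d 1 = d 1 + 0 := by rw [add_zero]; linear_combination (norm := abel) this.symm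
    exact add_left_cancel h2
  have hd2 : d (2 : R) = 0 := by
    have : (2 : R) = 1 + 1 := by norm_num
    rw [this, map_add, hd1, add_zero]
  have hdhalf : d (⅟(2 : R)) = 0 := by
    have h := hleib 2 (⅟(2 : R))
    rw [mul_invOf_self, hd1, hd2, smul_zero, add_zero] at h
    calc d (⅟(2 : R)) = (⅟(2 : R) * 2) • d (⅟(2 : R)) := by
          rw [invOf_mul_self, one_smul]
      _ = ⅟(2 : R) • ((2 : R) • d (⅟(2 : R))) := (smul_smul _ _ _).symm
      _ = 0 := by rw [← h, smul_zero]
  have hdsq : d (f ^ 2) = (2 * f) • d f := by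
    have := hleib f f
    rw [sq, this, two_mul, add_smul]
  have hdhf2 : d (⅟(2 : R) * f ^ 2) = f • d f := by
    rw [hleib, hdhalf, smul_zero, add_zero, hdsq, smul_smul]
    congr 1
    rw [← mul_assoc, invOf_mul_self, one_mul]
  have h1 : ⅟(2 : R) * 2 = 1 := invOf_mul_self 2
  refine ⟨by linear_combination (-(f ^ 2 * ft)) * h1, ?_, ?_, ?_⟩
  · rw [hleib f ft, hleib (f ^ 2) ft, hdsq]
    match_scalars
    · linear_combination (-(f ^ 2)) * h1
    · linear_combination (-(f * ft)) * h1
  · rw [map_neg, hdhalf, neg_zero, smul_zero, add_zero, map_neg, hdhf2, smul_neg,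
      smul_smul, mul_comm ft f]
    abel
  · rw [map_neg, hdhalf, neg_zero, map_zero, LinearMap.zero_apply, add_zero, map_neg,
      hdhf2, map_neg, LinearMap.neg_apply, hleib f ft, map_add, map_smul, map_smul,
      map_smul, smul_eq_mul, smul_eq_mul]
    simp only [LinearMap.smul_apply, smul_eq_mul]
    ring
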